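/- Let q ≥ 3 and let the alphabet be A = {0, 1, …, q−1}. Define S0 = {(π(0), π(1), …, π(q−1)) : π an even permutation of A} and S1 = {(π(0), π(1), …, π(q−1)) : π an odd permutation of A}. Then (S0, S1) is a spherical bitrade in the Hamming graph H(q, q) of volume q!/2. -/

import Mathlib

open scoped BigOperators

/-- The ball of radius 1 centered at `x` in a graph `G`. -/
def ball1 {V : Type*} (G : SimpleGraph V) (x : V) : Set V := {y | y = x ∨ G.Adj x y}

/-- A perfect one-error-correcting code: the balls of radius 1 centered at the
vertices of `C` partition the vertex set. -/
def IsPerfectCode {V : Type*} (G : SimpleGraph V) (C : Set V) : Prop :=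
  ∀ x : V, ∃! c, c ∈ C ∧ c ∈ ball1 G x

/-- A perfect bitrade: a pair of disjoint nonempty vertex sets such that every ball of
radius 1 contains exactly one vertex of each, or none of either. -/
def IsPerfectBitrade {V : Type*} (G : SimpleGraph V) (T0 T1 : Set V) : Prop :=
  Disjoint T0 T1 ∧ T0.Nonempty ∧ T1.Nonempty ∧
    ∀ x : V,
      ((∃! y, y ∈ T0 ∧ y ∈ ball1 G x) ∧ (∃! y, y ∈ T1 ∧ y ∈ ball1 G x)) ∨
        (∀ y, y ∈ T0 ∪ T1 → y ∉ ball1 G x)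

/-- A spherical bitrade: a pair of disjoint nonempty vertex sets such that every sphere of
radius 1 contains exactly one vertex of each, or none of either. -/
def IsSphericalBitrade {V : Type*} (G : SimpleGraph V) (S0 S1 : Set V) : Prop :=
  Disjoint S0 S1 ∧ S0.Nonempty ∧ S1.Nonempty ∧
    ∀ x : V,
      ((∃! y, y ∈ S0 ∧ G.Adj x y) ∧ (∃! y, y ∈ S1 ∧ G.Adj x y)) ∨
        (∀ y, y ∈ S0 ∪ S1 → ¬ G.Adj x y)

/-- The Hamming graph `H(n,q)`: vertices are `n`-tuples over an alphabet of size `q`,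
adjacent iff they differ in exactly one coordinate. -/
def hammingGraph (n q : ℕ) : SimpleGraph (Fin n → Fin q) where
  Adj x y := hammingDist x y = 1
  symm := by constructor; intro x y h; rwa [hammingDist_comm]
  loopless := by constructor; intro x h; simp [hammingDist_self] at h

/-- `f` is a `μ`-eigenfunction of `G`: `f` is not identically zero and
`μ · f x = ∑_{y ∈ O(x)} f y` for every vertex `x`. -/
def IsEigenfun {V : Type*} (G : SimpleGraph V) (μ : ℝ) (f : V → ℝ) : Prop :=
  f ≠ 0 ∧ ∀ x : V, μ * f x = ∑ᶠ y ∈ G.neighborSet x, f y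

/-- The characteristic function of a set of vertices. -/
noncomputable def chi {V : Type*} (C : Set V) : V → ℝ := Set.indicator C 1

/-- The code `C` has minimum (graph) distance exactly `d`. -/
def HasMinDist {V : Type*} (G : SimpleGraph V) (C : Set V) (d : ℕ) : Prop :=
  (∀ x ∈ C, ∀ y ∈ C, x ≠ y → (d : ℕ∞) ≤ G.edist x y) ∧
    ∃ x ∈ C, ∃ y ∈ C, x ≠ y ∧ G.edist x y = d

/-- The code `C` of `n`-tuples has minimum Hamming distance exactly `d`. -/
def HasMinHDist {n q : ℕ} (C : Set (Fin n → Fin q)) (d : ℕ) : Prop :=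
  (∀ x ∈ C, ∀ y ∈ C, x ≠ y → d ≤ hammingDist x y) ∧
    ∃ x ∈ C, ∃ y ∈ C, x ≠ y ∧ hammingDist x y = d

/-- `G` is distance-regular with intersection numbers `p i j k`. -/
def IsDistRegular {V : Type*} (G : SimpleGraph V) (p : ℕ → ℕ → ℕ → ℕ) : Prop :=
  G.Connected ∧ ∀ (i j k : ℕ) (x y : V), G.edist x y = k →
    {z : V | G.edist x z = i ∧ G.edist z y = j}.ncard = p i j k

/-!
Two permutations at Hamming distance one from a tuple `x` are at Hamming distance at most two from
each other; if distinct, they differ by a transposition and so have opposite signs. Hence `x` is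
adjacent to at most one permutation of each sign. Conversely, if `x` differs from `σ` at
coordinate `i` only, then `x i` repeats the value of `x` at `j = σ⁻¹ (x i)`, and `σ * swap j i` is
a second neighbour of `x`, of the opposite sign.
-/

open Equiv Finset

theorem hammingDist_eq_one_iff {ι : Type*} [Fintype ι] {β : ι → Type*} [∀ i, DecidableEq (β i)]
    {x y : ∀ i, β i} : hammingDist x y = 1 ↔ ∃ i, x i ≠ y i ∧ ∀ j ≠ i, x j = y j := by
  simp [hammingDist, card_eq_one, eq_singleton_iff_unique_mem, not_imp_comm]

namespace Equiv.Perm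

variable {α : Type*} [Fintype α] [DecidableEq α]

theorem hammingDist_eq_card_support (σ ρ : Perm α) :
    hammingDist ⇑σ ⇑ρ = #(σ⁻¹ * ρ).support := by
  rw [← hammingDist_comp (fun _ => ⇑σ⁻¹) (fun _ => σ⁻¹.injective)]
  simp [hammingDist, support, ne_comm]

theorem eq_of_sign_eq_of_hammingDist_le_two {σ ρ : Perm α} (hsign : sign σ = sign ρ)
    (hdist : hammingDist ⇑σ ⇑ρ ≤ 2) : σ = ρ := by
  rw [hammingDist_eq_card_support] at hdist
  have hsign' : sign (σ⁻¹ * ρ) = 1 := by simp [hsign]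
  have hne_two : #(σ⁻¹ * ρ).support ≠ 2 := fun h => by
    simpa [hsign'] using (card_support_eq_two.mp h).sign_eq
  have hzero : #(σ⁻¹ * ρ).support = 0 := by
    have := card_support_ne_one (σ⁻¹ * ρ)
    omega
  rwa [card_eq_zero, support_eq_empty_iff, inv_mul_eq_one] at hzero

theorem exists_sign_eq_neg_hammingDist_eq_one {x : α → α} {σ : Perm α}
    (h : hammingDist x ⇑σ = 1) : ∃ τ : Perm α, sign τ = -sign σ ∧ hammingDist x ⇑τ = 1 := by
  obtain ⟨i, hi, hoff⟩ := hammingDist_eq_one_iff.mp h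
  set j := σ.symm (x i)
  have hσj : σ j = x i := σ.apply_symm_apply _
  have hji : j ≠ i := fun hji => hi (hji ▸ hσj).symm
  have hxj : x j = x i := (hoff j hji).trans hσj
  refine ⟨σ * swap j i, by simp [sign_swap hji], hammingDist_eq_one_iff.mpr ⟨j, ?_, fun l hl => ?_⟩⟩
  · simpa [hxj] using hi
  · by_cases hli : l = i
    · simp [hli, hσj]
    · simp [swap_apply_of_ne_of_ne hl hli, hoff l hli]

def tuplesOfSign (α : Type*) [Fintype α] [DecidableEq α] (s : ℤˣ) : Set (α → α) :=
  {x | ∃ π : Perm α, sign π = s ∧ x = ⇑π}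

theorem disjoint_tuplesOfSign {s t : ℤˣ} (hst : s ≠ t) :
    _root_.Disjoint (tuplesOfSign α s) (tuplesOfSign α t) := by
  rw [Set.disjoint_left]
  rintro _ ⟨π, hπ, rfl⟩ ⟨ρ, hρ, hπρ⟩
  obtain rfl := DFunLike.coe_injective hπρ
  exact hst (hπ.symm.trans hρ)

theorem tuplesOfSign_nonempty [Nontrivial α] (s : ℤˣ) : (tuplesOfSign α s).Nonempty :=
  let ⟨π, hπ⟩ := sign_surjective α s
  ⟨π, π, hπ, rfl⟩

theorem ncard_tuplesOfSign_one [Nontrivial α] :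
    (tuplesOfSign α 1).ncard = (Fintype.card α).factorial / 2 := by
  have himage : tuplesOfSign α 1 = (⇑) '' (alternatingGroup α : Set (Perm α)) := by
    ext x
    simp [tuplesOfSign, eq_comm]
  rw [himage, Set.ncard_image_of_injective _ DFunLike.coe_injective, ← Nat.card_coe_set_eq,
    SetLike.coe_sort_coe, nat_card_alternatingGroup, Nat.card_eq_fintype_card]

theorem existsUnique_mem_tuplesOfSign_hammingDist_eq_one {x : α → α} {σ : Perm α}
    (h : hammingDist x ⇑σ = 1) (s : ℤˣ) :
    ∃! y, y ∈ tuplesOfSign α s ∧ hammingDist x y = 1 := by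
  obtain ⟨τ, hτ, hτx⟩ := exists_sign_eq_neg_hammingDist_eq_one h
  refine existsUnique_of_exists_of_unique ?_ ?_
  · by_cases hs : sign σ = s
    · exact ⟨σ, ⟨σ, hs, rfl⟩, h⟩
    · exact ⟨τ, ⟨τ, hτ.trans (Int.units_ne_iff_eq_neg.mp (Ne.symm hs)).symm, rfl⟩, hτx⟩
  · rintro _ _ ⟨⟨π, hπ, rfl⟩, hπx⟩ ⟨⟨ρ, hρ, rfl⟩, hρx⟩
    refine congrArg _ (eq_of_sign_eq_of_hammingDist_le_two (hπ.trans hρ.symm) ?_)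
    calc hammingDist ⇑π ⇑ρ ≤ hammingDist ⇑π x + hammingDist x ⇑ρ := hammingDist_triangle _ _ _
      _ = 2 := by rw [hammingDist_comm, hπx, hρx]

end Equiv.Perm

open Equiv.Perm in
theorem isSphericalBitrade_tuplesOfSign {q : ℕ} [Nontrivial (Fin q)] :
    IsSphericalBitrade (hammingGraph q q)
      (tuplesOfSign (Fin q) 1) (tuplesOfSign (Fin q) (-1)) := by
  refine ⟨disjoint_tuplesOfSign (by decide), tuplesOfSign_nonempty 1, tuplesOfSign_nonempty (-1),
    fun x => ?_⟩
  by_cases h : ∃ σ : Perm (Fin q), hammingDist x ⇑σ = 1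
  · obtain ⟨σ, hσ⟩ := h
    exact .inl ⟨existsUnique_mem_tuplesOfSign_hammingDist_eq_one hσ 1,
      existsUnique_mem_tuplesOfSign_hammingDist_eq_one hσ (-1)⟩
  · refine .inr ?_
    rintro _ (⟨π, -, rfl⟩ | ⟨π, -, rfl⟩) hπ <;> exact h ⟨π, hπ⟩

/-- For `q ≥ 3`, the set `S0` of tuples `(π(0),…,π(q-1))` over even
permutations `π` and the set `S1` of such tuples over odd permutations form a spherical
bitrade in `H(q,q)` of volume `q!/2`. -/
theorem statement10 (q : ℕ) (hq : 3 ≤ q) :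
    IsSphericalBitrade (hammingGraph q q)
      {x : Fin q → Fin q | ∃ π : Equiv.Perm (Fin q), Equiv.Perm.sign π = 1 ∧ x = ⇑π}
      {x : Fin q → Fin q | ∃ π : Equiv.Perm (Fin q), Equiv.Perm.sign π = -1 ∧ x = ⇑π} ∧
    {x : Fin q → Fin q | ∃ π : Equiv.Perm (Fin q), Equiv.Perm.sign π = 1 ∧ x = ⇑π}.ncard =
      Nat.factorial q / 2 := by
  have : Nontrivial (Fin q) := Fin.nontrivial_iff_two_le.mpr (by omega)
  have hcard := Equiv.Perm.ncard_tuplesOfSign_one (α := Fin q)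
  rw [Fintype.card_fin] at hcard
  exact ⟨isSphericalBitrade_tuplesOfSign, hcard⟩
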